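/- arXiv:0901.2906 — 2 statements merged into one kernel-verified Lean document; each statement's English description precedes it below -/
import Mathlib

section
/- Let X and Y be finite types and f : X → Y → Bool. Call a finite family 𝓑 of subsets of Y a consistent witness family for f if for every pair (x̄, ȳ) ∈ X × Y with f x̄ ȳ = true there exists B ∈ 𝓑 with ȳ ∈ B and B ⊆ Y₁(x̄), where Y₁(x̄) = {y : f x̄ y = true}. Then the minimum cardinality of a consistent witness family for f equals C¹(f), the minimum number of 1-monochromatic rectangles needed to cover {(x,y) : f x y = true}. (One direction takes the column sets of a minimum 1-cover; the other direction associates to each B ∈ 𝓑 the rectangle {x : B ⊆ Y₁(x)} × B.) -/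
/-- A 1-cover of `f` indexed by `Fin n`. -/
def IsOneCover {X Y : Type} (f : X → Y → Bool) {n : ℕ}
    (A : Fin n → Set X) (B : Fin n → Set Y) : Prop :=
  (∀ i, ∀ x ∈ A i, ∀ y ∈ B i, f x y = true) ∧
  (∀ x y, f x y = true ↔ ∃ i, x ∈ A i ∧ y ∈ B i)

/-- `C¹(f)`: the minimum cardinality of a 1-cover of `f`. -/
noncomputable def oneCoverNum {X Y : Type} (f : X → Y → Bool) : ℕ :=
  sInf {n : ℕ | ∃ (A : Fin n → Set X) (B : Fin n → Set Y), IsOneCover f A B}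

/-- A consistent witness family for `f`: a finite family of subsets of `Y`
such that whenever `f xb yb = true`, some member contains `yb` and is
contained in `Y₁(xb)`. -/
def IsWitnessFamily {X Y : Type} (f : X → Y → Bool) (F : Finset (Set Y)) : Prop :=
  ∀ xb yb, f xb yb = true → ∃ B ∈ F, yb ∈ B ∧ B ⊆ {y : Y | f xb y = true}

/-- From a witness family one gets a 1-cover of the same size. -/
lemma cover_of_witness {X Y : Type} (f : X → Y → Bool) (F : Finset (Set Y))
    (hF : IsWitnessFamily f F) :
    ∃ (A : Fin F.card → Set X) (B : Fin F.card → Set Y), IsOneCover f A B := by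
  classical
  let e : {s // s ∈ F} ≃ Fin F.card := F.equivFin
  refine ⟨fun i => {x | (e.symm i : Set Y) ⊆ {y | f x y = true}},
      fun i => (e.symm i : Set Y), ?_, ?_⟩
  · intro i x hx y hy
    exact hx hy
  · intro x y
    constructor
    · intro hxy
      obtain ⟨B, hBF, hyB, hBsub⟩ := hF x y hxy
      exact ⟨e ⟨B, hBF⟩, by simpa using hBsub, by simpa using hyB⟩
    · rintro ⟨i, hx, hy⟩
      exact hx hy

/-- From a 1-cover one gets a witness family of size ≤ n. -/
lemma witness_of_cover {X Y : Type} (f : X → Y → Bool) {n : ℕ}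
    (A : Fin n → Set X) (B : Fin n → Set Y) (h : IsOneCover f A B) :
    ∃ F : Finset (Set Y), IsWitnessFamily f F ∧ F.card ≤ n := by
  classical
  refine ⟨Finset.image B Finset.univ, ?_, ?_⟩
  · intro x y hxy
    obtain ⟨i, hx, hy⟩ := (h.2 x y).mp hxy
    exact ⟨B i, Finset.mem_image_of_mem B (Finset.mem_univ i), hy,
      fun y' hy' => h.1 i x hx y' hy'⟩
  · exact (Finset.card_image_le).trans (by simp)

/-- The minimum cardinality of a consistent witness family for `f`
equals `C¹(f)`. -/
theorem witness_family_min_card_eq_oneCoverNum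
    {X Y : Type} [Fintype X] [Fintype Y] (f : X → Y → Bool) :
    sInf {n : ℕ | ∃ F : Finset (Set Y), IsWitnessFamily f F ∧ F.card = n} =
      oneCoverNum f := by
  classical
  set W := {n : ℕ | ∃ F : Finset (Set Y), IsWitnessFamily f F ∧ F.card = n} with hW
  set C := {n : ℕ | ∃ (A : Fin n → Set X) (B : Fin n → Set Y), IsOneCover f A B} with hC
  have hWne : W.Nonempty := by
    refine ⟨_, Finset.image (fun x => {y | f x y = true}) Finset.univ, ?_, rfl⟩
    intro x y hxy
    exact ⟨{y | f x y = true},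
      Finset.mem_image_of_mem _ (Finset.mem_univ x), hxy, fun _ h => h⟩
  have hCne : C.Nonempty := by
    obtain ⟨n, F, hF, hcard⟩ := hWne
    exact ⟨F.card, cover_of_witness f F hF⟩
  apply le_antisymm
  · -- sInf W ≤ sInf C
    obtain ⟨A, B, hAB⟩ := Nat.sInf_mem hCne
    obtain ⟨F, hF, hle⟩ := witness_of_cover f A B hAB
    exact le_trans (Nat.sInf_le ⟨F, hF, rfl⟩) hle
  · -- oneCoverNum ≤ sInf W
    obtain ⟨F, hF, hcard⟩ := Nat.sInf_mem hWne
    have := cover_of_witness f F hF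
    rw [hcard] at this
    exact Nat.sInf_le this
end

section
/- Let X and Y be finite types and f : X → Y → Bool. Call a finite family 𝓟 of pairs (B, z) with B ⊆ Y and z ∈ Bool a two-sided consistent witness family for f if for every (x̄, ȳ) ∈ X × Y there exists (B, z) ∈ 𝓟 with ȳ ∈ B, z = f x̄ ȳ, and B ⊆ {y ∈ Y : f x̄ y = z}. Then the minimum cardinality of a two-sided consistent witness family for f equals C⁰(f) + C¹(f), where C⁰(f) and C¹(f) are the minimum numbers of 0-monochromatic (respectively 1-monochromatic) rectangles needed to cover {(x,y) : f x y = false} (respectively {(x,y) : f x y = true}). -/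
/-- A `z`-cover of `f` indexed by `Fin n`: `z`-monochromatic rectangles whose
union is `{(x, y) | f x y = z}`. -/
def IsZCover {X Y : Type} (f : X → Y → Bool) (z : Bool) {n : ℕ}
    (A : Fin n → Set X) (B : Fin n → Set Y) : Prop :=
  (∀ i, ∀ x ∈ A i, ∀ y ∈ B i, f x y = z) ∧
  (∀ x y, f x y = z ↔ ∃ i, x ∈ A i ∧ y ∈ B i)

/-- `Cᶻ(f)`: the minimum cardinality of a `z`-cover of `f`. -/
noncomputable def zCoverNum {X Y : Type} (f : X → Y → Bool) (z : Bool) : ℕ :=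
  sInf {n : ℕ | ∃ (A : Fin n → Set X) (B : Fin n → Set Y), IsZCover f z A B}

/-- A two-sided consistent witness family for `f`: a finite family of pairs
`(B, z)` such that for every `(xb, yb)` some member has `yb ∈ B`,
`z = f xb yb` and `B ⊆ {y | f xb y = z}`. -/
def IsTwoSidedWitnessFamily {X Y : Type} (f : X → Y → Bool)
    (P : Finset (Set Y × Bool)) : Prop :=
  ∀ xb yb, ∃ p ∈ P, yb ∈ p.1 ∧ p.2 = f xb yb ∧ p.1 ⊆ {y : Y | f xb y = p.2}

lemma exists_zCover {X Y : Type} [Fintype X] [Fintype Y] (f : X → Y → Bool) (z : Bool) :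
    ∃ (n : ℕ) (A : Fin n → Set X) (B : Fin n → Set Y), IsZCover f z A B := by
  classical
  set e := Fintype.equivFin (X × Y) with he
  refine ⟨Fintype.card (X × Y),
    fun i => if f (e.symm i).1 (e.symm i).2 = z then {(e.symm i).1} else ∅,
    fun i => {(e.symm i).2}, ?_, ?_⟩
  · intro i x hx y hy
    by_cases h : f (e.symm i).1 (e.symm i).2 = z
    · simp only [h, if_pos, Set.mem_singleton_iff] at hx hy
      subst hx; subst hy; exact h
    · simp [h] at hx
  · intro x y
    constructor
    · intro h
      refine ⟨e (x, y), ?_, ?_⟩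
      · simp [h]
      · simp
    · rintro ⟨i, hx, hy⟩
      by_cases h : f (e.symm i).1 (e.symm i).2 = z
      · simp only [h, if_pos, Set.mem_singleton_iff] at hx hy
        subst hx; subst hy; exact h
      · simp [h] at hx

lemma zCoverNum_le_filter {X Y : Type} (f : X → Y → Bool)
    (P : Finset (Set Y × Bool)) (h : IsTwoSidedWitnessFamily f P) (z : Bool) :
    zCoverNum f z ≤ (P.filter (fun p => p.2 = z)).card := by
  classical
  set Q := P.filter (fun p => p.2 = z) with hQ
  set e := Q.equivFin with he
  apply Nat.sInf_le
  refine ⟨fun i => {x | ((e.symm i : Set Y × Bool)).1 ⊆ {y : Y | f x y = z}},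
    fun i => ((e.symm i : Set Y × Bool)).1, ?_, ?_⟩
  · intro i x hx y hy
    exact hx hy
  · intro x y
    constructor
    · intro hfx
      obtain ⟨p, hp, hyp, hz, hsub⟩ := h x y
      have hpz : p.2 = z := hz.trans hfx
      have hpQ : p ∈ Q := Finset.mem_filter.mpr ⟨hp, hpz⟩
      refine ⟨e ⟨p, hpQ⟩, ?_, ?_⟩
      · simpa [hpz] using hsub
      · simpa using hyp
    · rintro ⟨i, hx, hy⟩
      exact hx hy

lemma filter_true_eq {P : Finset (Set Y × Bool)} :
    P.filter (fun p => p.2 = true) = P.filter (fun p => ¬ p.2 = false) := by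
  apply Finset.filter_congr
  intro p _
  simp

/-- The minimum cardinality of a two-sided consistent witness family for `f`
equals `C⁰(f) + C¹(f)`. -/
theorem two_sided_witness_family_min_card_eq
    {X Y : Type} [Fintype X] [Fintype Y] (f : X → Y → Bool) :
    sInf {n : ℕ | ∃ P : Finset (Set Y × Bool),
        IsTwoSidedWitnessFamily f P ∧ P.card = n} =
      zCoverNum f false + zCoverNum f true := by
  classical
  -- obtain minimum covers
  have h0 : zCoverNum f false ∈
      {n : ℕ | ∃ (A : Fin n → Set X) (B : Fin n → Set Y), IsZCover f false A B} := by
    apply Nat.sInf_mem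
    obtain ⟨n, A, B, h⟩ := exists_zCover f false
    exact ⟨n, A, B, h⟩
  have h1 : zCoverNum f true ∈
      {n : ℕ | ∃ (A : Fin n → Set X) (B : Fin n → Set Y), IsZCover f true A B} := by
    apply Nat.sInf_mem
    obtain ⟨n, A, B, h⟩ := exists_zCover f true
    exact ⟨n, A, B, h⟩
  obtain ⟨A0, B0, hc0⟩ := h0
  obtain ⟨A1, B1, hc1⟩ := h1
  -- the constructed witness family
  set P : Finset (Set Y × Bool) :=
    (Finset.univ.image fun i : Fin (zCoverNum f false) => ((B0 i : Set Y), false)) ∪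
    (Finset.univ.image fun i : Fin (zCoverNum f true) => ((B1 i : Set Y), true)) with hP
  have hPw : IsTwoSidedWitnessFamily f P := by
    intro xb yb
    cases hfb : f xb yb with
    | false =>
      obtain ⟨i, hxi, hyi⟩ := (hc0.2 xb yb).mp hfb
      refine ⟨(B0 i, false), ?_, hyi, rfl, ?_⟩
      · exact Finset.mem_union_left _ (Finset.mem_image.mpr ⟨i, Finset.mem_univ i, rfl⟩)
      · intro y hy
        exact hc0.1 i xb hxi y hy
    | true =>
      obtain ⟨i, hxi, hyi⟩ := (hc1.2 xb yb).mp hfb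
      refine ⟨(B1 i, true), ?_, hyi, rfl, ?_⟩
      · exact Finset.mem_union_right _ (Finset.mem_image.mpr ⟨i, Finset.mem_univ i, rfl⟩)
      · intro y hy
        exact hc1.1 i xb hxi y hy
  have hPcard : P.card ≤ zCoverNum f false + zCoverNum f true := by
    refine le_trans (Finset.card_union_le _ _) ?_
    gcongr <;> exact le_trans (Finset.card_image_le) (by simp)
  apply le_antisymm
  · calc sInf {n : ℕ | ∃ P : Finset (Set Y × Bool),
        IsTwoSidedWitnessFamily f P ∧ P.card = n} ≤ P.card :=
          Nat.sInf_le ⟨P, hPw, rfl⟩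
      _ ≤ _ := hPcard
  · have hne : {n : ℕ | ∃ P : Finset (Set Y × Bool),
        IsTwoSidedWitnessFamily f P ∧ P.card = n}.Nonempty := ⟨P.card, P, hPw, rfl⟩
    obtain ⟨Q, hQw, hQcard⟩ := Nat.sInf_mem hne
    calc zCoverNum f false + zCoverNum f true
        ≤ (Q.filter (fun p => p.2 = false)).card + (Q.filter (fun p => p.2 = true)).card := by
          gcongr
          · exact zCoverNum_le_filter f Q hQw false
          · exact zCoverNum_le_filter f Q hQw true
      _ = Q.card := by
          rw [filter_true_eq]
          exact Finset.card_filter_add_card_filter_not _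
      _ = _ := hQcard
end
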